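/- Let p ≥ 1 and let λ₁,…,λ_{p+1} be distinct real numbers. Define the basic spline S : ℝ → ℝ by S(t) = Σ_{j=1}^{p+1} (λ_j − t)_+^{p−1} / ∏_{k≠j}(λ_j − λ_k). Then S(t) ≥ 0 for all t ∈ ℝ, and S(t) = 0 whenever t < min_{1≤k≤p+1} λ_k or t > max_{1≤k≤p+1} λ_k. -/

import Mathlib

/-!
The basic spline is the divided difference `S(t) = [λ₁, …, λ_{p+1}] (· - t)_+^{p-1}`. Divided
differences satisfy the recurrence `(b - a) [s] f = [s ∖ a] f - [s ∖ b] f`, and multiplying `f`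
by `x - t` gives the Cox–de Boor recurrence
`(b - a) S_s = (b - t) S'_{s ∖ a} + (t - a) S'_{s ∖ b}` with `S'` the spline of one order lower.
With `a = min s`, `b = max s` and `a ≤ t ≤ b` both coefficients are nonnegative, so positivity
follows by induction on the number of knots, starting from the step function
`((b - t)_+^0 - (a - t)_+^0) / (b - a)` for two knots. Outside `[a, b]` the truncated power is either
identically zero on the knots or a polynomial of degree `p - 1`, whose `p`-th divided difference
vanishes.
-/

open Finset

section Field

variable {K : Type*} [Field K] [DecidableEq K]

def divDiff (s : Finset K) (f : K → K) : K :=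
  ∑ x ∈ s, f x / ∏ y ∈ s.erase x, (x - y)

theorem divDiff_congr {s : Finset K} {f g : K → K} (h : ∀ x ∈ s, f x = g x) :
    divDiff s f = divDiff s g :=
  sum_congr rfl fun x hx => by rw [h x hx]

theorem divDiff_eq_zero_of_forall_eq_zero {s : Finset K} {f : K → K} (h : ∀ x ∈ s, f x = 0) :
    divDiff s f = 0 :=
  sum_eq_zero fun x hx => by rw [h x hx, zero_div]

@[simp]
theorem divDiff_singleton (a : K) (f : K → K) : divDiff {a} f = f a := by
  simp [divDiff]

theorem divDiff_image {ι : Type*} [Fintype ι] [DecidableEq ι] {l : ι → K}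
    (hl : Function.Injective l) (f : K → K) :
    divDiff (univ.image l) f = ∑ j, f (l j) / ∏ k ∈ univ.erase j, (l j - l k) := by
  rw [divDiff, sum_image hl.injOn]
  refine sum_congr rfl fun j _ => ?_
  rw [← image_erase hl, prod_image hl.injOn]

theorem divDiff_sub_mul {s : Finset K} {a : K} (ha : a ∈ s) (c : K) (f : K → K) :
    divDiff s (fun x => (x - c) * f x) = (a - c) * divDiff s f + divDiff (s.erase a) f := by
  have hterm : ∀ x ∈ s.erase a, (x - a) * f x / ∏ y ∈ s.erase x, (x - y)
      = f x / ∏ y ∈ (s.erase a).erase x, (x - y) := by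
    intro x hx
    have hxa : x ≠ a := ne_of_mem_erase hx
    rw [erase_right_comm, ← mul_prod_erase (s.erase x) (fun y => x - y) (mem_erase.2 ⟨hxa.symm, ha⟩),
      mul_div_mul_left _ _ (sub_ne_zero.2 hxa)]
  calc divDiff s (fun x => (x - c) * f x)
      = (a - c) * divDiff s f + ∑ x ∈ s, (x - a) * f x / ∏ y ∈ s.erase x, (x - y) := by
        rw [divDiff, divDiff, mul_sum, ← sum_add_distrib]
        exact sum_congr rfl fun x _ => by ring
    _ = (a - c) * divDiff s f + divDiff (s.erase a) f := by
        rw [← sum_erase s (a := a) (by simp), sum_congr rfl hterm]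
        rfl

theorem divDiff_recurrence {s : Finset K} {a b : K} (ha : a ∈ s) (hb : b ∈ s) (f : K → K) :
    (b - a) * divDiff s f = divDiff (s.erase a) f - divDiff (s.erase b) f := by
  linear_combination divDiff_sub_mul ha 0 f - divDiff_sub_mul hb 0 f

theorem sub_mul_divDiff_sub_mul {s : Finset K} {a b : K} (ha : a ∈ s) (hb : b ∈ s) (t : K)
    (f : K → K) :
    (b - a) * divDiff s (fun x => (x - t) * f x)
      = (b - t) * divDiff (s.erase a) f + (t - a) * divDiff (s.erase b) f := by
  linear_combination (b - a) * divDiff_sub_mul hb t f + (b - t) * divDiff_recurrence ha hb f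

theorem divDiff_const {s : Finset K} (hs : 2 ≤ #s) (c : K) : divDiff s (fun _ => c) = 0 := by
  induction s using Finset.strongInduction with
  | H s ih =>
    obtain ⟨a, ha, b, hb, hab⟩ := one_lt_card.1 hs
    have herase : divDiff (s.erase a) (fun _ => c) = divDiff (s.erase b) (fun _ => c) := by
      rcases hs.eq_or_lt with hs2 | hs3
      · have hone : ∀ u : Finset K, #u = 1 → divDiff u (fun _ => c) = c := by
          intro u hu
          obtain ⟨x, rfl⟩ := card_eq_one.1 hu
          exact divDiff_singleton x _
        rw [hone _ (by rw [card_erase_of_mem ha]; omega),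
          hone _ (by rw [card_erase_of_mem hb]; omega)]
      · rw [ih _ (erase_ssubset ha) (by rw [card_erase_of_mem ha]; omega),
          ih _ (erase_ssubset hb) (by rw [card_erase_of_mem hb]; omega)]
    have h := divDiff_recurrence ha hb (fun _ => c)
    rw [herase, sub_self] at h
    exact (mul_eq_zero.1 h).resolve_left (sub_ne_zero.2 hab.symm)

theorem divDiff_sub_pow {s : Finset K} {m : ℕ} (hs : m + 2 ≤ #s) (t : K) :
    divDiff s (fun x => (x - t) ^ m) = 0 := by
  induction m generalizing s with
  | zero => simpa using divDiff_const hs 1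
  | succ m ih =>
    obtain ⟨a, ha⟩ := card_pos.1 (by omega : 0 < #s)
    have h := divDiff_sub_mul ha t (fun x => (x - t) ^ m)
    simp only [← pow_succ'] at h
    rw [h, ih (by omega), ih (by rw [card_erase_of_mem ha]; omega), mul_zero, add_zero]

end Field

theorem Finset.erase_eq_singleton_of_card_eq_two {α : Type*} [DecidableEq α] {s : Finset α}
    {a b : α} (hs : #s = 2) (ha : a ∈ s) (hb : b ∈ s) (hab : a ≠ b) : s.erase a = {b} := by
  obtain ⟨c, hc⟩ := card_eq_one.1 (show #(s.erase a) = 1 by rw [card_erase_of_mem ha, hs])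
  have hb' : b ∈ s.erase a := mem_erase.2 ⟨hab.symm, hb⟩
  rw [hc, mem_singleton] at hb'
  rw [hc, hb']

section TruncatedPower

variable {K : Type*} [Field K] [LinearOrder K]

def truncPow (k : ℕ) (x : K) : K :=
  if 0 ≤ x then x ^ k else 0

theorem truncPow_of_nonneg {x : K} (hx : 0 ≤ x) (k : ℕ) : truncPow k x = x ^ k :=
  if_pos hx

theorem truncPow_of_neg {x : K} (hx : x < 0) (k : ℕ) : truncPow k x = 0 :=
  if_neg hx.not_ge

theorem truncPow_succ (k : ℕ) (x : K) : truncPow (k + 1) x = x * truncPow k x := by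
  unfold truncPow
  split_ifs <;> ring

variable [IsStrictOrderedRing K]

theorem monotone_truncPow_zero : Monotone (truncPow 0 : K → K) := by
  intro x y hxy
  by_cases hx : 0 ≤ x
  · rw [truncPow_of_nonneg hx, truncPow_of_nonneg (hx.trans hxy), pow_zero, pow_zero]
  · rw [truncPow_of_neg (not_le.1 hx)]
    unfold truncPow
    split_ifs <;> simp

theorem divDiff_truncPow_of_forall_le {s : Finset K} {m : ℕ} (hs : m + 2 ≤ #s) {t : K}
    (ht : ∀ x ∈ s, t ≤ x) : divDiff s (fun x => truncPow m (x - t)) = 0 := by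
  rw [divDiff_congr fun x hx => truncPow_of_nonneg (sub_nonneg.2 (ht x hx)) m, divDiff_sub_pow hs]

theorem divDiff_truncPow_of_forall_lt {s : Finset K} (m : ℕ) {t : K} (ht : ∀ x ∈ s, x < t) :
    divDiff s (fun x => truncPow m (x - t)) = 0 :=
  divDiff_eq_zero_of_forall_eq_zero fun x hx => truncPow_of_neg (sub_neg.2 (ht x hx)) m

theorem divDiff_truncPow_nonneg {s : Finset K} {m : ℕ} (hs : #s = m + 2) (t : K) :
    0 ≤ divDiff s (fun x => truncPow m (x - t)) := by
  induction m generalizing s with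
  | zero =>
    have hne : s.Nonempty := card_pos.1 (by omega)
    have ha := min'_mem s hne
    have hb := max'_mem s hne
    have hab : s.min' hne < s.max' hne := min'_lt_max'_of_card s (by omega)
    refine nonneg_of_mul_nonneg_right ?_ (sub_pos.2 hab)
    rw [divDiff_recurrence ha hb, erase_eq_singleton_of_card_eq_two hs ha hb hab.ne,
      erase_eq_singleton_of_card_eq_two hs hb ha hab.ne', divDiff_singleton, divDiff_singleton,
      sub_nonneg]
    exact monotone_truncPow_zero (sub_le_sub_right hab.le t)
  | succ m ih =>
    have hne : s.Nonempty := card_pos.1 (by omega)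
    have ha := min'_mem s hne
    have hb := max'_mem s hne
    have hab : s.min' hne < s.max' hne := min'_lt_max'_of_card s (by omega)
    rcases lt_or_ge t (s.min' hne) with hta | hat
    · exact (divDiff_truncPow_of_forall_le hs.ge fun x hx => hta.le.trans (min'_le s x hx)).ge
    rcases lt_or_ge (s.max' hne) t with hbt | htb
    · exact (divDiff_truncPow_of_forall_lt _ fun x hx => (le_max' s x hx).trans_lt hbt).ge
    have hcox := sub_mul_divDiff_sub_mul ha hb t (fun x => truncPow m (x - t))
    simp only [← truncPow_succ] at hcox
    refine nonneg_of_mul_nonneg_right (hcox ▸ add_nonneg ?_ ?_) (sub_pos.2 hab)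
    · exact mul_nonneg (sub_nonneg.2 htb) (ih (by rw [card_erase_of_mem ha]; omega))
    · exact mul_nonneg (sub_nonneg.2 hat) (ih (by rw [card_erase_of_mem hb]; omega))

end TruncatedPower

/-- The basic spline `S(t) = ∑ j (λ_j - t)_+^{p-1} / ∏_{k≠j}(λ_j - λ_k)` (with the
truncated power of exponent `0` being the indicator of `[0,∞)`) is nonnegative and
vanishes outside `[min λ_k, max λ_k]`. -/
theorem stmt10 (p : ℕ) (hp : 1 ≤ p) (l : Fin (p + 1) → ℝ) (hl : Function.Injective l) :
    (∀ t : ℝ, 0 ≤ ∑ j : Fin (p + 1),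
        (if 0 ≤ l j - t then (l j - t) ^ (p - 1) else 0) / ∏ k ∈ univ.erase j, (l j - l k))
    ∧ ∀ t : ℝ, (t < univ.inf' univ_nonempty l ∨ univ.sup' univ_nonempty l < t) →
        ∑ j : Fin (p + 1),
          (if 0 ≤ l j - t then (l j - t) ^ (p - 1) else 0) /
            ∏ k ∈ univ.erase j, (l j - l k) = 0 := by
  set s := univ.image l
  have hs : #s = p - 1 + 2 := by
    rw [card_image_of_injective _ hl, card_univ, Fintype.card_fin]
    omega
  have hS : ∀ t : ℝ, divDiff s (fun x => truncPow (p - 1) (x - t)) = ∑ j : Fin (p + 1),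
      (if 0 ≤ l j - t then (l j - t) ^ (p - 1) else 0) / ∏ k ∈ univ.erase j, (l j - l k) :=
    fun t => divDiff_image hl _
  refine ⟨fun t => hS t ▸ divDiff_truncPow_nonneg hs t, fun t ht => ?_⟩
  rw [← hS]
  rcases ht with ht | ht
  · refine divDiff_truncPow_of_forall_le hs.ge fun x hx => ?_
    obtain ⟨j, -, rfl⟩ := mem_image.1 hx
    exact ht.le.trans (inf'_le l (mem_univ j))
  · refine divDiff_truncPow_of_forall_lt _ fun x hx => ?_
    obtain ⟨j, -, rfl⟩ := mem_image.1 hx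
    exact (le_sup' l (mem_univ j)).trans_lt ht
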